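/- One-step contraction on non-expanding graphs: let θ ≥ 2 be an integer, p ∈ (0,1), and set δ = (1−p)/3. Let G be a simple graph on n vertices and let m ≤ n be a positive integer such that every W ⊆ V with |W| = m satisfies |W^{*2}| ≤ (1+δ)m. Then for every initial set X₀ with |X₀| ≤ m, the threshold-θ contact process satisfies P( |X₁| ≥ (1−δ)m ) ≤ exp( −δ² m / 3 ). -/

import Mathlib

/-!
After one step only vertices of `X₀^{*θ}` can be infected, and `X₀^{*θ} ⊆ W^{*2}` for any
`m`-set `W ⊇ X₀`, so at most `(1+δ)m` vertices are exposed, each infected independently with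
probability `p = 1 - 3δ`. Hence `|X₁|` is a sum of at most `(1+δ)m` independent Bernoulli(`p`)
variables, with mean at most `(1+δ)(1-3δ)m ≤ (1-2δ)m`. The Chernoff bound at parameter `δ`,
with `1 + x ≤ eˣ` and a third-order Taylor bound on `e^δ`, gives the exponent `-δ²m/3`.
-/

open MeasureTheory ProbabilityTheory

/-- For `W ⊆ V`, `starSet G l W = W^{*l}` is the set of vertices having at least `l`
neighbors in `W`. -/
noncomputable def starSet {V : Type*} [Fintype V] (G : SimpleGraph V) (l : ℕ)
    (W : Finset V) : Finset V :=
  letI := Classical.dec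
  Finset.univ.filter fun v => l ≤ (W.filter fun u => G.Adj v u).card

/-- The discrete-time threshold-`θ` contact process with infection probability `p` and initial
infected set `X0`, driven by the field `ω` of `[0,1]`-valued random variables:
`X_{t+1} = {v ∈ (X_t)^{*θ} : ω(t+1, v) ≤ p}`. -/
noncomputable def tcp {V : Type*} [Fintype V] (G : SimpleGraph V) (θ : ℕ) (p : ℝ)
    (X0 : Finset V) (ω : ℕ × V → ℝ) : ℕ → Finset V
  | 0 => X0
  | t + 1 =>
      letI := Classical.dec
      (starSet G θ (tcp G θ p X0 ω t)).filter fun v => ω (t + 1, v) ≤ p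

/-- `P` is the law of an i.i.d. field of Uniform`[0,1]` random variables indexed by `ℕ × V`,
i.e. the infinite product of uniform measures on `[0,1]`: the coordinate maps are independent
and each is uniformly distributed on `[0,1]`. -/
def IsIIDUniform {V : Type*} (P : Measure ((ℕ × V) → ℝ)) : Prop :=
  IsProbabilityMeasure P ∧
    iIndepFun (fun i ω => ω i) P ∧
    ∀ i : ℕ × V, P.map (fun ω => ω i) = volume.restrict (Set.Icc (0 : ℝ) 1)

open Finset Real

section Graph

variable {V : Type*} [Fintype V] (G : SimpleGraph V)

lemma starSet_subset_starSet_of_le {k l : ℕ} (h : l ≤ k) (W : Finset V) :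
    starSet G k W ⊆ starSet G l W := by
  intro v hv
  simp only [starSet, mem_filter, mem_univ, true_and] at hv ⊢
  exact h.trans hv

lemma starSet_mono (l : ℕ) {W W' : Finset V} (h : W ⊆ W') :
    starSet G l W ⊆ starSet G l W' := by
  classical
  intro v hv
  simp only [starSet, mem_filter, mem_univ, true_and] at hv ⊢
  exact hv.trans (card_le_card (filter_subset_filter _ h))

lemma card_starSet_le_of_forall_card_eq {l θ m : ℕ} (hθ : l ≤ θ) (hm : m ≤ Fintype.card V)
    {c : ℝ} (hW : ∀ W : Finset V, #W = m → (#(starSet G l W) : ℝ) ≤ c)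
    {X : Finset V} (hX : #X ≤ m) : (#(starSet G θ X) : ℝ) ≤ c := by
  obtain ⟨W, hXW, -, hWm⟩ := exists_subsuperset_card_eq X.subset_univ hX (by simpa using hm)
  calc (#(starSet G θ X) : ℝ) ≤ #(starSet G l W) := by
        exact_mod_cast card_le_card
          ((starSet_subset_starSet_of_le G hθ X).trans (starSet_mono G l hXW))
    _ ≤ c := hW W hWm

lemma tcp_one (θ : ℕ) (p : ℝ) (X0 : Finset V) (ω : ℕ × V → ℝ) :
    tcp G θ p X0 ω 1 = {v ∈ starSet G θ X0 | ω (1, v) ≤ p} :=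
  rfl

end Graph

section Bernoulli

variable {Ω : Type*} [MeasurableSpace Ω] {μ : Measure Ω}

lemma mgf_indicator_one [IsProbabilityMeasure μ] {s : Set Ω} (hs : MeasurableSet s) (t : ℝ) :
    mgf (s.indicator 1) μ t = 1 + μ.real s * (exp t - 1) := by
  have h : (fun ω => exp (t * s.indicator 1 ω)) =
      fun ω => 1 + s.indicator (fun _ => exp t - 1) ω := by
    ext ω
    by_cases hω : ω ∈ s <;> simp [hω]
  rw [mgf, h, integral_add (integrable_const _) ((integrable_const _).indicator hs),
    integral_indicator hs, setIntegral_const]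
  simp [smul_eq_mul]

lemma measureReal_restrict_Icc_zero_one_Iic {p : ℝ} (hp0 : 0 ≤ p) (hp1 : p ≤ 1) :
    (volume.restrict (Set.Icc (0 : ℝ) 1)).real (Set.Iic p) = p := by
  have h : Set.Iic p ∩ Set.Icc 0 1 = Set.Icc 0 p := by
    ext x
    simp only [Set.mem_inter_iff, Set.mem_Iic, Set.mem_Icc]
    grind
  rw [measureReal_restrict_apply measurableSet_Iic, h, volume_real_Icc_of_le hp0, sub_zero]

lemma mgf_indicator_Iic_of_map_eq_uniform {U : Ω → ℝ}
    (hU : μ.map U = volume.restrict (Set.Icc (0 : ℝ) 1)) {p : ℝ} (hp0 : 0 ≤ p) (hp1 : p ≤ 1)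
    (t : ℝ) : mgf ((Set.Iic p).indicator 1 ∘ U) μ t = 1 + p * (exp t - 1) := by
  have hUm : AEMeasurable U μ := AEMeasurable.of_map_ne_zero (by simp [hU])
  have : IsProbabilityMeasure (volume.restrict (Set.Icc (0 : ℝ) 1)) := ⟨by simp⟩
  rw [← mgf_map hUm, hU, mgf_indicator_one measurableSet_Iic,
    measureReal_restrict_Icc_zero_one_Iic hp0 hp1]
  exact ((measurable_const.indicator measurableSet_Iic).const_mul t).exp.aestronglyMeasurable

lemma measureReal_card_filter_le_ge_le_exp_mul_pow {ι : Type*} {U : ι → Ω → ℝ}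
    (hindep : iIndepFun U μ)
    (hunif : ∀ i, μ.map (U i) = volume.restrict (Set.Icc (0 : ℝ) 1)) (S : Finset ι)
    {p t : ℝ} (hp0 : 0 ≤ p) (hp1 : p ≤ 1) (ht : 0 ≤ t) (a : ℝ) :
    μ.real {ω | a ≤ #{i ∈ S | U i ω ≤ p}} ≤ exp (-t * a) * (1 + p * (exp t - 1)) ^ #S := by
  have := hindep.isProbabilityMeasure
  set B : ι → Ω → ℝ := fun i => (Set.Iic p).indicator 1 ∘ U i
  have hcount : ∀ ω, (#{i ∈ S | U i ω ≤ p} : ℝ) = (∑ i ∈ S, B i) ω := by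
    intro ω
    simp [B, Finset.sum_apply, Set.indicator_apply]
  have hB_indep : iIndepFun B μ :=
    hindep.comp (fun _ => (Set.Iic p).indicator 1) fun _ =>
      measurable_const.indicator measurableSet_Iic
  have hB_meas : ∀ i, AEMeasurable (B i) μ := fun i =>
    (measurable_const.indicator measurableSet_Iic).comp_aemeasurable
      (AEMeasurable.of_map_ne_zero (by simp [hunif i]))
  have hmgf : mgf (∑ i ∈ S, B i) μ t = (1 + p * (exp t - 1)) ^ #S := by
    rw [hB_indep.mgf_sum₀ hB_meas, Finset.prod_congr rfl fun i _ =>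
      mgf_indicator_Iic_of_map_eq_uniform (hunif i) hp0 hp1 t, Finset.prod_const]
  have hint : Integrable (fun ω => exp (t * (∑ i ∈ S, B i) ω)) μ := by
    refine mgf_pos_iff.1 (hmgf ▸ pow_pos ?_ _)
    nlinarith [add_one_le_exp t]
  calc μ.real {ω | a ≤ #{i ∈ S | U i ω ≤ p}}
      = μ.real {ω | a ≤ (∑ i ∈ S, B i) ω} := by simp_rw [hcount]
    _ ≤ exp (-t * a) * mgf (∑ i ∈ S, B i) μ t := measure_ge_le_exp_mul_mgf a ht hint
    _ = exp (-t * a) * (1 + p * (exp t - 1)) ^ #S := by rw [hmgf]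

end Bernoulli

lemma chernoff_exponent_le {δ : ℝ} (h0 : 0 ≤ δ) (h1 : δ ≤ 1 / 3) :
    (1 + δ) * (1 - 3 * δ) * (exp δ - 1) - δ * (1 - δ) ≤ -δ ^ 2 / 3 := by
  have hexp : exp δ ≤ 1 + δ + δ ^ 2 / 2 + 2 / 9 * δ ^ 3 := by
    have h := (abs_sub_le_iff.1 (exp_bound (n := 3) (x := δ) (by rw [abs_of_nonneg h0]; linarith)
      (by norm_num))).1
    norm_num [Finset.sum_range_succ, Nat.factorial, abs_of_nonneg h0] at h
    linarith
  nlinarith [pow_nonneg h0 3, mul_nonneg h0 h0, add_one_le_exp δ]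

lemma exp_neg_mul_mul_pow_le {p : ℝ} (hp0 : 0 ≤ p) (hp1 : p ≤ 1) {m : ℝ} (hm : 0 ≤ m) {k : ℕ}
    (hk : (k : ℝ) ≤ (1 + (1 - p) / 3) * m) :
    exp (-((1 - p) / 3) * ((1 - (1 - p) / 3) * m)) * (1 + p * (exp ((1 - p) / 3) - 1)) ^ k ≤
      exp (-((1 - p) / 3) ^ 2 * m / 3) := by
  set δ := (1 - p) / 3
  have hp : p = 1 - 3 * δ := by simp only [δ]; ring
  have hq : 0 ≤ p * (exp δ - 1) := mul_nonneg hp0 (by linarith [add_one_le_exp δ])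
  calc exp (-δ * ((1 - δ) * m)) * (1 + p * (exp δ - 1)) ^ k
      ≤ exp (-δ * ((1 - δ) * m)) * exp (k * (p * (exp δ - 1))) := by
        rw [exp_nat_mul]
        gcongr
        linarith [add_one_le_exp (p * (exp δ - 1))]
    _ ≤ exp (-δ * ((1 - δ) * m)) * exp ((1 + δ) * m * (p * (exp δ - 1))) := by gcongr
    _ = exp (((1 + δ) * (1 - 3 * δ) * (exp δ - 1) - δ * (1 - δ)) * m) := by
        rw [← exp_add, hp]; ring_nf
    _ ≤ exp (-δ ^ 2 * m / 3) := by
        rw [exp_le_exp]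
        nlinarith [chernoff_exponent_le (δ := δ) (by simp only [δ]; linarith)
          (by simp only [δ]; linarith)]

theorem tcp_one_step_contraction_general {V : Type*} [Fintype V] (G : SimpleGraph V)
    (θ : ℕ) (hθ : 2 ≤ θ) (p : ℝ) (hp : p ∈ Set.Ioo (0 : ℝ) 1)
    (n m : ℕ) (hn : Fintype.card V = n) (hmn : m ≤ n)
    (hW : ∀ W : Finset V, W.card = m →
      ((starSet G 2 W).card : ℝ) ≤ (1 + (1 - p) / 3) * m)
    (X0 : Finset V) (hX0 : X0.card ≤ m)
    (P : Measure ((ℕ × V) → ℝ)) (hP : IsIIDUniform P) :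
    P {ω | (1 - (1 - p) / 3) * m ≤ ((tcp G θ p X0 ω 1).card : ℝ)} ≤
      ENNReal.ofReal (Real.exp (-((1 - p) / 3) ^ 2 * m / 3)) := by
  obtain ⟨hp0, hp1⟩ := hp
  obtain ⟨_, hindep, hunif⟩ := hP
  have hS := card_starSet_le_of_forall_card_eq G hθ (hn ▸ hmn) hW hX0
  have hindep_one : iIndepFun (fun v ω => ω ((1 : ℕ), v)) P :=
    hindep.precomp fun _ _ h => (Prod.mk.inj h).2
  rw [← ofReal_measureReal]
  refine ENNReal.ofReal_le_ofReal ?_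
  simp_rw [tcp_one]
  exact (measureReal_card_filter_le_ge_le_exp_mul_pow hindep_one (fun v => hunif (1, v)) _
    hp0.le hp1.le (by linarith) _).trans (exp_neg_mul_mul_pow_le hp0.le hp1.le m.cast_nonneg hS)

/-- One-step contraction on non-expanding graphs: with `δ = (1-p)/3`, if every set of `m`
vertices `W` satisfies `|W^{*2}| ≤ (1+δ)m`, then started from at most `m` infected vertices,
the probability that the threshold-`θ` contact process has at least `(1-δ)m` infected vertices
after one step is at most `exp(-δ²m/3)`. -/
theorem tcp_one_step_contraction {V : Type*} [Fintype V] (G : SimpleGraph V)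
    (θ : ℕ) (hθ : 2 ≤ θ) (p : ℝ) (hp : p ∈ Set.Ioo (0 : ℝ) 1)
    (n m : ℕ) (hn : Fintype.card V = n) (hm : 0 < m) (hmn : m ≤ n)
    (hW : ∀ W : Finset V, W.card = m →
      ((starSet G 2 W).card : ℝ) ≤ (1 + (1 - p) / 3) * m)
    (X0 : Finset V) (hX0 : X0.card ≤ m)
    (P : Measure ((ℕ × V) → ℝ)) (hP : IsIIDUniform P) :
    P {ω | (1 - (1 - p) / 3) * m ≤ ((tcp G θ p X0 ω 1).card : ℝ)} ≤
      ENNReal.ofReal (Real.exp (-((1 - p) / 3) ^ 2 * m / 3)) :=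
  tcp_one_step_contraction_general G θ hθ p hp n m hn hmn hW X0 hX0 P hP
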